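/- arXiv:1208.4150 — 2 statements merged into one kernel-verified Lean document; each statement's English description precedes it below -/
import Mathlib

section
/- Let I ⊆ [0,1] satisfy the DCC and let J_0 ⊆ [0,1] be a finite set. Then the set I_0 of all c ∈ I such that (m - 1 + f + k c)/m ∈ J_0 for some positive integers k, m and some f ∈ D(I) is finite. -/
/-!
A set of reals with the DCC is partially well ordered, hence so is `I_+` (it lies in the additive
closure of the nonnegative set `I`), and so is `D(I)`, the image of `ℕ_{≥1} × I_+` under
`(m, f) ↦ (m - 1 + f) / m = 1 - (1 - f) / m`, a map monotone in both arguments since `f ≤ 1`.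

If `(m - 1 + f + k c) / m = j`, then `f + k c = 1 - m (1 - j)`; as `0 ≤ f + k c` and `j ≤ 1`, only
finitely many values `t` arise this way. For fixed `t`, the solutions `(k, c, f)` of `f + k c = t`
with `c > 0` form an antichain in the partially well ordered set `ℕ × I × D(I)`, hence are finitely
many.
-/

/-- A set `S` satisfies the DCC if it contains no infinite strictly decreasing
sequence. -/
def HasDCC (S : Set ℝ) : Prop := ¬ ∃ f : ℕ → ℝ, (∀ n, f n ∈ S) ∧ StrictAnti f

/-- `I_+` is `{0}` together with all finite sums of elements of `I`
lying in `[0,1]`. -/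
def Iplus (I : Set ℝ) : Set ℝ :=
  {0} ∪ { j : ℝ | j ∈ Set.Icc (0:ℝ) 1 ∧
    ∃ l : List ℝ, l ≠ [] ∧ (∀ x ∈ l, x ∈ I) ∧ l.sum = j }

/-- `D(I) = { a ≤ 1 : a = (m-1+f)/m, m ∈ ℕ_{≥1}, f ∈ I_+ }`. -/
def DSet (I : Set ℝ) : Set ℝ :=
  { a : ℝ | a ≤ 1 ∧ ∃ m : ℕ, 1 ≤ m ∧ ∃ f ∈ Iplus I, a = ((m : ℝ) - 1 + f) / m }

open Set

theorem HasDCC.isWF {S : Set ℝ} (h : HasDCC S) : S.IsWF :=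
  isWF_iff_no_descending_seq.2 fun f hf hmem => h ⟨f, hmem, hf⟩

theorem Iplus_subset_Icc (I : Set ℝ) : Iplus I ⊆ Icc 0 1 := by
  rintro x (rfl | ⟨hx, -⟩)
  exacts [⟨le_rfl, zero_le_one⟩, hx]

theorem Iplus_isPWO {I : Set ℝ} (hI₀ : ∀ x ∈ I, 0 ≤ x) (hI : I.IsPWO) : (Iplus I).IsPWO := by
  refine (hI.addSubmonoid_closure hI₀).mono ?_
  rintro x (rfl | ⟨-, l, -, hl, rfl⟩)
  · exact (AddSubmonoid.closure I).zero_mem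
  · exact list_sum_mem fun x hx => AddSubmonoid.subset_closure (hl x hx)

theorem monotoneOn_sub_one_add_div :
    MonotoneOn (fun p : ℕ × ℝ => ((p.1 : ℝ) - 1 + p.2) / p.1) (Ici 1 ×ˢ Iic 1) := by
  rintro ⟨m, x⟩ ⟨hm, hx⟩ ⟨m', x'⟩ ⟨-, -⟩ ⟨hmm', hxx'⟩
  simp only [mem_Ici, mem_Iic] at hm hx hmm' hxx' ⊢
  have hm₀ : (0 : ℝ) < m := by exact_mod_cast hm
  have hmm'ℝ : (m : ℝ) ≤ m' := by exact_mod_cast hmm'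
  have hm'₀ : (0 : ℝ) < m' := hm₀.trans_le hmm'ℝ
  calc ((m : ℝ) - 1 + x) / m = 1 - (1 - x) / m := by field_simp; ring
    _ ≤ 1 - (1 - x) / m' := by gcongr
    _ ≤ 1 - (1 - x') / m' := by gcongr
    _ = ((m' : ℝ) - 1 + x') / m' := by field_simp; ring

theorem DSet_isPWO {I : Set ℝ} (h : (Iplus I).IsPWO) : (DSet I).IsPWO := by
  refine (((isPWO_of_wellQuasiOrderedLE (Ici 1)).prod h).image_of_monotoneOn
    (monotoneOn_sub_one_add_div.mono (prod_mono le_rfl (Iplus_subset_Icc I |>.trans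
      Icc_subset_Iic_self)))).mono ?_
  rintro a ⟨-, m, hm, f, hf, rfl⟩
  exact ⟨(m, f), ⟨hm, hf⟩, rfl⟩

theorem nonneg_of_mem_DSet {I : Set ℝ} {a : ℝ} (ha : a ∈ DSet I) : 0 ≤ a := by
  obtain ⟨-, m, hm, f, hf, rfl⟩ := ha
  have hm₁ : (1 : ℝ) ≤ m := by exact_mod_cast hm
  have hf₀ := (Iplus_subset_Icc I hf).1
  exact div_nonneg (by linarith) (by linarith)

theorem finite_setOf_add_natCast_mul_eq {C D : Set ℝ} (hC₀ : ∀ c ∈ C, 0 ≤ c) (hC : C.IsPWO)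
    (hD : D.IsPWO) (t : ℝ) :
    {c ∈ C | ∃ k : ℕ, 1 ≤ k ∧ ∃ f ∈ D, f + k * c = t}.Finite := by
  set T : Set (ℕ × ℝ × ℝ) :=
    {p | 1 ≤ p.1 ∧ 0 < p.2.1 ∧ p.2.1 ∈ C ∧ p.2.2 ∈ D ∧ p.2.2 + p.1 * p.2.1 = t}
  have hT : T.IsPWO :=
    ((isPWO_of_wellQuasiOrderedLE univ).prod (hC.prod hD)).mono
      fun p hp => ⟨trivial, hp.2.2.1, hp.2.2.2.1⟩
  have hT_antichain : IsAntichain (· ≤ ·) T := by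
    rintro ⟨k, c, f⟩ ⟨hk, hc, -, -, ht⟩ ⟨k', c', f'⟩ ⟨-, hc', -, -, ht'⟩ hne ⟨hkk', hcc', hff'⟩
    simp only at hkk' hcc' hff' ht ht'
    have hkℝ : (1 : ℝ) ≤ k := by exact_mod_cast hk
    have hkk'ℝ : (k : ℝ) ≤ k' := by exact_mod_cast hkk'
    obtain rfl : c = c' := by nlinarith
    obtain rfl : k = k' := by exact_mod_cast (show (k : ℝ) = k' by nlinarith)
    obtain rfl : f = f' := by linarith
    exact hne rfl
  refine ((hT_antichain.finite_of_partiallyWellOrderedOn hT).image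
    (fun p => p.2.1) |>.insert 0).subset ?_
  rintro c ⟨hc, k, hk, f, hf, ht⟩
  rcases (hC₀ c hc).eq_or_lt with rfl | hc₀
  · exact mem_insert 0 _
  · exact mem_insert_of_mem 0 ⟨(k, c, f), ⟨hk, hc₀, hc, hf, ht⟩, rfl⟩

theorem finite_setOf_eq_one_sub_mul_nonneg {j : ℝ} (hj : j ≤ 1) :
    {t : ℝ | 0 ≤ t ∧ ∃ m : ℕ, t = 1 - m * (1 - j)}.Finite := by
  rcases hj.eq_or_lt with rfl | hj
  · exact (finite_singleton 1).subset fun t ⟨_, m, ht⟩ => by simp [ht]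
  · refine ((finite_Iic ⌈1 / (1 - j)⌉₊).image fun m : ℕ => 1 - m * (1 - j)).subset ?_
    rintro t ⟨ht, m, rfl⟩
    have hm : (m : ℝ) ≤ 1 / (1 - j) := by rw [le_div_iff₀ (by linarith)]; linarith
    exact ⟨m, mem_Iic.2 (by exact_mod_cast hm.trans (Nat.le_ceil _)), rfl⟩

/-- If `I ⊆ [0,1]` satisfies the DCC and `J₀ ⊆ [0,1]` is finite, then
`I₀ = { c ∈ I : (m-1+f+kc)/m ∈ J₀ for some k, m ≥ 1 and f ∈ D(I) }` is finite. -/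
theorem dcc_acc_finite (I : Set ℝ) (hI : I ⊆ Set.Icc 0 1) (hdcc : HasDCC I)
    (J₀ : Set ℝ) (hJ₀ : J₀ ⊆ Set.Icc 0 1) (hJfin : J₀.Finite) :
    { c ∈ I | ∃ k m : ℕ, 1 ≤ k ∧ 1 ≤ m ∧ ∃ f ∈ DSet I,
        ((m : ℝ) - 1 + f + k * c) / m ∈ J₀ }.Finite := by
  have hI₀ : ∀ c ∈ I, 0 ≤ c := fun c hc => (hI hc).1
  have hIpwo : I.IsPWO := hdcc.isWF.isPWO
  have hD : (DSet I).IsPWO := DSet_isPWO (Iplus_isPWO hI₀ hIpwo)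
  have hT := hJfin.biUnion fun j hj => finite_setOf_eq_one_sub_mul_nonneg (hJ₀ hj).2
  refine (hT.biUnion fun t _ => finite_setOf_add_natCast_mul_eq hI₀ hIpwo hD t).subset ?_
  rintro c ⟨hc, k, m, hk, hm, f, hf, hj⟩
  have hm₀ : (0 : ℝ) < m := by exact_mod_cast hm
  have hkc : (0 : ℝ) ≤ k * c := mul_nonneg k.cast_nonneg (hI₀ c hc)
  simp only [mem_iUnion]
  refine ⟨f + k * c, ⟨_, hj, by linarith [nonneg_of_mem_DSet hf], m, ?_⟩, hc, k, hk, f, hf, rfl⟩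
  field_simp at hj ⊢
  linarith
end

section
/- Let I ⊆ [0,1] satisfy the DCC and let (λ_l) be a strictly increasing sequence in (0,1]. Then the set J = { λ_l · i : i ∈ I, l ∈ ℕ } satisfies the DCC. -/
open Set

theorem hasDCC_iff_isWF (S : Set ℝ) : HasDCC S ↔ S.IsWF := by
  simp [HasDCC, isWF_iff_no_descending_seq, and_comm]

theorem Monotone.isPWO_range {α β : Type*} [Preorder α] [LinearOrder β] [WellFoundedLT β]
    {f : β → α} (hf : Monotone f) : (range f).IsPWO := by
  simpa only [image_univ] using (IsPWO.of_linearOrder univ).image_of_monotone hf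

theorem Set.IsPWO.image2_mul_of_nonneg {α : Type*} [MulZeroClass α] [Preorder α] [PosMulMono α]
    [MulPosMono α] {s t : Set α} (hs : s.IsPWO) (ht : t.IsPWO) (hs₀ : ∀ a ∈ s, 0 ≤ a)
    (ht₀ : ∀ b ∈ t, 0 ≤ b) : (image2 (· * ·) s t).IsPWO := by
  rw [← image_uncurry_prod]
  refine (hs.prod ht).image_of_monotoneOn ?_
  rintro ⟨a, b⟩ ⟨-, hb⟩ ⟨a', b'⟩ ⟨ha', -⟩ ⟨haa', hbb'⟩
  exact mul_le_mul haa' hbb' (ht₀ b hb) (hs₀ a' ha')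

/-- Let `I ⊆ [0,1]` satisfy the DCC and `(λ_l)` be a strictly increasing sequence
in `(0,1]`. Then `J = { λ_l · i : i ∈ I, l ∈ ℕ }` satisfies the DCC. -/
theorem scaled_dcc (I : Set ℝ) (hI : I ⊆ Set.Icc 0 1) (hdcc : HasDCC I)
    (lam : ℕ → ℝ) (hlam : StrictMono lam) (hlam' : ∀ l, lam l ∈ Set.Ioc (0:ℝ) 1) :
    HasDCC { x : ℝ | ∃ i ∈ I, ∃ l : ℕ, x = lam l * i } := by
  rw [hasDCC_iff_isWF] at hdcc ⊢
  have hJ := hlam.monotone.isPWO_range.image2_mul_of_nonneg hdcc.isPWO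
    (forall_mem_range.2 fun l => (hlam' l).1.le) fun i hi => (hI hi).1
  refine hJ.isWF.mono ?_
  rintro _ ⟨i, hi, l, rfl⟩
  exact mem_image2_of_mem (mem_range_self l) hi
end
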